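/- arXiv:1307.6598 — 4 statements merged into one kernel-verified Lean document; each statement's English description precedes it below -/
import Mathlib

section
/- Let (R^•, d_0) be a cochain complex of k-vector spaces concentrated in degrees ≤ 0 with H^i(R^•, d_0) = 0 for all i < 0. Let R^•_ℏ = R^• ⊗_k k[ℏ] and let d_ℏ = d_0 + ℏ d_1 + … + ℏ^n d_n be an ℏ-linear degree +1 map with d_ℏ² = 0. Set Γ_i = ℏ^i R^•_ℏ and let F_i H^0_ℏ be the image of H^0(ℏ^i R^•_ℏ, d_ℏ) → H^0(R^•_ℏ, d_ℏ). Then for every i ≥ 0 there is a canonical isomorphism of k[ℏ]-modules F_i H^0_ℏ / F_{i+1} H^0_ℏ ≅ ℏ^i H^0(R^•, d_0). -/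
/-!
Send `w ∈ R⁰_ℏ` to the class of `ℏ^i w` in `F_i / F_{i+1}`. This map is onto, and the point is
that its kernel consists of the `w` whose reduction mod `ℏ` is a `d₀`-boundary. That rests on the
boundaries `B = d_ℏ(R⁻¹_ℏ)` being `ℏ`-saturated: `B ∩ ℏ^j R⁰_ℏ = ℏ^j B`. The proof goes one power
of `ℏ` at a time. If `d_ℏ u ≡ 0` mod `ℏ`, then `u` mod `ℏ` is a `d₀`-cycle, hence a boundary
`d₀ t` because `H⁻¹(R^•, d₀) = 0`. Replacing `u` by `u - d_ℏ t` does not change `d_ℏ u` and makes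
`u` divisible by `ℏ`. Since `k[ℏ] ⊗ -` is exact, `ℏ` acts injectively and divisibility by `ℏ` is
detected mod `ℏ`.
-/

noncomputable section

open Polynomial TensorProduct

/-- `W n = k[ℏ] ⊗ R^{-n}`, the `ℏ`-linear extension of a complex in degrees `≤ 0`
(indexed here by `n ∈ ℕ` corresponding to cohomological degree `-n`). -/
abbrev Wc (k : Type*) [Field k] (V : ℕ → Type*) [∀ n, AddCommGroup (V n)]
    [∀ n, Module k (V n)] (n : ℕ) : Type _ := Polynomial k ⊗[k] V n

/-- Reduction modulo `ℏ`: evaluation of the polynomial variable at `0`. -/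
def epsW (k : Type*) [Field k] (V : ℕ → Type*) [∀ n, AddCommGroup (V n)]
    [∀ n, Module k (V n)] (n : ℕ) : Wc k V n →ₗ[k] V n :=
  (TensorProduct.lid k (V n)).toLinearMap.comp
    (LinearMap.rTensor (V n) (Polynomial.aeval (0 : k)).toLinearMap)

namespace PolynomialTensor

variable (k : Type*) [Field k] (M : Type*) [AddCommGroup M] [Module k M]

def evalZero : k[X] ⊗[k] M →ₗ[k] M :=
  (TensorProduct.lid k M).toLinearMap ∘ₗ (Polynomial.aeval (0 : k)).toLinearMap.rTensor M

variable {k M}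

@[simp]
lemma evalZero_tmul (p : k[X]) (v : M) : evalZero k M (p ⊗ₜ v) = p.eval 0 • v := by
  simp [evalZero]

lemma evalZero_surjective : Function.Surjective (evalZero k M) :=
  fun v => ⟨(1 : k[X]) ⊗ₜ v, by simp⟩

lemma smul_injective {p : k[X]} (hp : p ≠ 0) :
    Function.Injective fun x : k[X] ⊗[k] M => p • x :=
  Module.Flat.rTensor_preserves_injective_linearMap (Algebra.lsmul k k k[X] p)
    (mul_right_injective₀ hp)

lemma evalZero_eq_zero_iff (x : k[X] ⊗[k] M) : evalZero k M x = 0 ↔ ∃ y, (X : k[X]) • y = x := by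
  have hexact : Function.Exact (Algebra.lsmul k k k[X] (X : k[X]))
      (Polynomial.aeval (0 : k) : k[X] →ₐ[k] k).toLinearMap := by
    intro p
    simp only [AlgHom.toLinearMap_apply, Polynomial.coe_aeval_eq_eval]
    rw [← Polynomial.coeff_zero_eq_eval_zero, ← Polynomial.X_dvd_iff]
    exact ⟨fun ⟨q, hq⟩ => ⟨q, hq.symm⟩, fun ⟨q, hq⟩ => ⟨q, hq.symm⟩⟩
  have hsurj : Function.Surjective (Polynomial.aeval (0 : k) : k[X] →ₐ[k] k).toLinearMap :=
    fun c => ⟨C c, by simp⟩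
  rw [evalZero, LinearMap.comp_apply, LinearEquiv.coe_coe, LinearEquiv.map_eq_zero_iff]
  exact rTensor_exact M hexact hsurj x

lemma evalZero_X_smul (x : k[X] ⊗[k] M) : evalZero k M ((X : k[X]) • x) = 0 :=
  (evalZero_eq_zero_iff _).2 ⟨x, rfl⟩

end PolynomialTensor

open scoped Pointwise

section ImageFiltration

variable {R W : Type*} [CommRing R] [AddCommGroup W] [Module R W] (B : Submodule R W) (r : R)

def imageFiltration (ℓ : ℕ) : Submodule R (W ⧸ B) :=
  (Ideal.span {r ^ ℓ} • ⊤ : Submodule R W).map B.mkQ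

abbrev gradedPiece (i : ℕ) : Type _ :=
  imageFiltration B r i ⧸ (imageFiltration B r (i + 1)).comap (imageFiltration B r i).subtype

def toGradedPiece (i : ℕ) : W →ₗ[R] gradedPiece B r i :=
  Submodule.mkQ _ ∘ₗ LinearMap.codRestrict _ (B.mkQ ∘ₗ LinearMap.lsmul R W (r ^ i)) fun _ =>
    Submodule.mem_map_of_mem <|
      Submodule.smul_mem_smul (Ideal.mem_span_singleton_self _) Submodule.mem_top

variable {B r}

lemma toGradedPiece_surjective (i : ℕ) : Function.Surjective (toGradedPiece B r i) := by
  intro q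
  obtain ⟨⟨_, hx⟩, rfl⟩ := Submodule.mkQ_surjective _ q
  obtain ⟨x, hxΓ, rfl⟩ := Submodule.mem_map.1 hx
  rw [Submodule.ideal_span_singleton_smul, Submodule.mem_smul_pointwise_iff_exists] at hxΓ
  obtain ⟨w, -, rfl⟩ := hxΓ
  exact ⟨w, rfl⟩

lemma toGradedPiece_eq_zero_iff (i : ℕ) (w : W) :
    toGradedPiece B r i w = 0 ↔ r ^ i • w ∈ B ⊔ r ^ (i + 1) • (⊤ : Submodule R W) := by
  rw [toGradedPiece, LinearMap.comp_apply, Submodule.mkQ_apply, Submodule.Quotient.mk_eq_zero,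
    Submodule.mem_comap, ← Submodule.ideal_span_singleton_smul, ← Submodule.comap_map_mkQ]
  rfl

end ImageFiltration

namespace PerturbedComplex

open PolynomialTensor

variable {k : Type*} [Field k] {M₀ M₁ M₂ : Type*} [AddCommGroup M₀] [Module k M₀]
  [AddCommGroup M₁] [Module k M₁] [AddCommGroup M₂] [Module k M₂]
  {d₀ : M₁ →ₗ[k] M₀} {d₁ : M₂ →ₗ[k] M₁}
  {δ₀ : k[X] ⊗[k] M₁ →ₗ[k[X]] k[X] ⊗[k] M₀} {δ₁ : k[X] ⊗[k] M₂ →ₗ[k[X]] k[X] ⊗[k] M₁}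

lemma exists_boundary_eq_X_smul_boundary (hexact : LinearMap.ker d₀ ≤ LinearMap.range d₁)
    (hδ : δ₀ ∘ₗ δ₁ = 0) (hred₀ : ∀ z, evalZero k M₀ (δ₀ z) = d₀ (evalZero k M₁ z))
    (hred₁ : ∀ z, evalZero k M₁ (δ₁ z) = d₁ (evalZero k M₂ z))
    {u : k[X] ⊗[k] M₁} (hu : evalZero k M₀ (δ₀ u) = 0) :
    ∃ u', δ₀ u = (X : k[X]) • δ₀ u' := by
  obtain ⟨t, ht⟩ := hexact (show evalZero k M₁ u ∈ LinearMap.ker d₀ by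
    rw [LinearMap.mem_ker, ← hred₀, hu])
  obtain ⟨u', hu'⟩ := (evalZero_eq_zero_iff (u - δ₁ ((1 : k[X]) ⊗ₜ t))).1 (by
    rw [map_sub, hred₁, evalZero_tmul, eval_one, one_smul, ht, sub_self])
  refine ⟨u', ?_⟩
  rw [← map_smul, hu', map_sub, ← LinearMap.comp_apply δ₀ δ₁, hδ, LinearMap.zero_apply, sub_zero]

lemma exists_boundary_eq_X_pow_smul_boundary (hexact : LinearMap.ker d₀ ≤ LinearMap.range d₁)
    (hδ : δ₀ ∘ₗ δ₁ = 0) (hred₀ : ∀ z, evalZero k M₀ (δ₀ z) = d₀ (evalZero k M₁ z))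
    (hred₁ : ∀ z, evalZero k M₁ (δ₁ z) = d₁ (evalZero k M₂ z))
    (j : ℕ) {z : k[X] ⊗[k] M₁} {w : k[X] ⊗[k] M₀} (hz : δ₀ z = (X : k[X]) ^ j • w) :
    ∃ u, δ₀ z = (X : k[X]) ^ j • δ₀ u := by
  induction j generalizing w with
  | zero => exact ⟨z, by rw [pow_zero, one_smul]⟩
  | succ j ih =>
    obtain ⟨u, hu⟩ := ih (w := (X : k[X]) • w) (by rw [hz, pow_succ, mul_smul])
    have hXw : δ₀ u = (X : k[X]) • w :=
      smul_injective (pow_ne_zero j X_ne_zero) (by dsimp only; rw [← hu, hz, pow_succ, mul_smul])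
    obtain ⟨u', hu'⟩ :=
      exists_boundary_eq_X_smul_boundary hexact hδ hred₀ hred₁ (by rw [hXw, evalZero_X_smul])
    exact ⟨u', by rw [hu, hu', pow_succ, mul_smul]⟩

lemma X_pow_smul_mem_range_sup_iff (hexact : LinearMap.ker d₀ ≤ LinearMap.range d₁)
    (hδ : δ₀ ∘ₗ δ₁ = 0) (hred₀ : ∀ z, evalZero k M₀ (δ₀ z) = d₀ (evalZero k M₁ z))
    (hred₁ : ∀ z, evalZero k M₁ (δ₁ z) = d₁ (evalZero k M₂ z)) (i : ℕ) (w : k[X] ⊗[k] M₀) :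
    (X : k[X]) ^ i • w ∈ LinearMap.range δ₀ ⊔ (X : k[X]) ^ (i + 1) • ⊤ ↔
      evalZero k M₀ w ∈ LinearMap.range d₀ := by
  rw [Submodule.mem_sup]
  constructor
  · rintro ⟨_, ⟨z, rfl⟩, _, hy, hsum⟩
    obtain ⟨y, -, rfl⟩ := (Submodule.mem_smul_pointwise_iff_exists _ _ _).1 hy
    obtain ⟨u, hu⟩ := exists_boundary_eq_X_pow_smul_boundary hexact hδ hred₀ hred₁ i
      (w := w - (X : k[X]) • y) (by rw [smul_sub, ← hsum, pow_succ, mul_smul, add_sub_cancel_right])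
    have hw : w = δ₀ u + (X : k[X]) • y :=
      smul_injective (pow_ne_zero i X_ne_zero) (by
        dsimp only; rw [smul_add, ← hu, ← mul_smul, ← pow_succ, hsum])
    exact ⟨evalZero k M₁ u, by rw [hw, map_add, evalZero_X_smul, add_zero, hred₀]⟩
  · rintro ⟨v, hv⟩
    obtain ⟨y, hy⟩ := (evalZero_eq_zero_iff (w - δ₀ ((1 : k[X]) ⊗ₜ v))).1 (by
      rw [map_sub, hred₀, evalZero_tmul, eval_one, one_smul, hv, sub_self])
    refine ⟨δ₀ ((X : k[X]) ^ i • (1 : k[X]) ⊗ₜ v), LinearMap.mem_range_self _ _,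
      (X : k[X]) ^ (i + 1) • y, Submodule.smul_mem_pointwise_smul _ _ _ Submodule.mem_top, ?_⟩
    rw [map_smul, pow_succ, mul_smul, hy, ← smul_add, add_sub_cancel]

end PerturbedComplex

open PolynomialTensor PerturbedComplex

theorem perturbed_complex_graded_H0_general
    (k : Type*) [Field k] (V : ℕ → Type*)
    [∀ n, AddCommGroup (V n)] [∀ n, Module k (V n)]
    (d : ∀ n, V (n + 1) →ₗ[k] V n)
    (hexact : ∀ n, LinearMap.ker (d n) ≤ LinearMap.range (d (n + 1)))
    (dh : ∀ n, Wc k V (n + 1) →ₗ[Polynomial k] Wc k V n)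
    (hdh2 : ∀ n, (dh n).comp (dh (n + 1)) = 0)
    (hmod : ∀ n, (epsW k V n).comp ((dh n).restrictScalars k) =
      (d n).comp (epsW k V (n + 1))) :
    ∀ i : ℕ,
      letI B : Submodule (Polynomial k) (Wc k V 0) := LinearMap.range (dh 0)
      letI Γ : ℕ → Submodule (Polynomial k) (Wc k V 0) :=
        fun ℓ => Ideal.span {(Polynomial.X : Polynomial k) ^ ℓ} • ⊤
      letI F : ℕ → Submodule (Polynomial k) ((Wc k V 0) ⧸ B) :=
        fun ℓ => (Γ ℓ).map B.mkQ
      Nonempty ((F i ⧸ Submodule.comap (F i).subtype (F (i + 1))) ≃ₗ[k]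
        (V 0 ⧸ LinearMap.range (d 0))) := by
  intro i
  -- `epsW k V n` is `evalZero k (V n)` by definition
  have hred : ∀ n z, evalZero k (V n) (dh n z) = d n (evalZero k (V (n + 1)) z) :=
    fun n => LinearMap.congr_fun (hmod n)
  let π := (toGradedPiece (LinearMap.range (dh 0)) (X : k[X]) i).restrictScalars k
  let ψ := (LinearMap.range (d 0)).mkQ ∘ₗ evalZero k (V 0)
  have hker : LinearMap.ker π = LinearMap.ker ψ := by
    ext w
    rw [LinearMap.mem_ker, LinearMap.restrictScalars_apply, toGradedPiece_eq_zero_iff,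
      LinearMap.mem_ker, LinearMap.comp_apply, Submodule.mkQ_apply, Submodule.Quotient.mk_eq_zero]
    exact X_pow_smul_mem_range_sup_iff (hexact 0) (hdh2 0) (hred 0) (hred 1) i w
  have hπ : Function.Surjective π := by
    rw [LinearMap.coe_restrictScalars]; exact toGradedPiece_surjective i
  have hψ : Function.Surjective ψ := (Submodule.mkQ_surjective _).comp evalZero_surjective
  exact ⟨(π.quotKerEquivOfSurjective hπ).symm ≪≫ₗ Submodule.quotEquivOfEq _ _ hker ≪≫ₗ
    ψ.quotKerEquivOfSurjective hψ⟩

/-- Lemma on perturbed differentials (first version): if `(R^•, d₀)` is a complex of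
`k`-vector spaces in degrees `≤ 0` (degree `-n` is `V n`), with vanishing cohomology in all
negative degrees, and `d_ℏ` is an `ℏ`-linear differential on `R^•[ℏ]` which reduces to `d₀`
modulo `ℏ`, then with `Γ_ℓ = ℏ^ℓ R^•[ℏ]` and `F_ℓ H⁰_ℏ` the image of `H⁰(ℏ^ℓ R^•_ℏ)` in
`H⁰_ℏ`, one has `F_i H⁰_ℏ / F_{i+1} H⁰_ℏ ≅ ℏ^i H⁰(R^•, d₀) ≅ H⁰(R^•, d₀)`. -/
theorem perturbed_complex_graded_H0
    (k : Type*) [Field k] (V : ℕ → Type*)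
    [∀ n, AddCommGroup (V n)] [∀ n, Module k (V n)]
    (d : ∀ n, V (n + 1) →ₗ[k] V n)
    (hd2 : ∀ n, (d n).comp (d (n + 1)) = 0)
    (hexact : ∀ n, LinearMap.ker (d n) ≤ LinearMap.range (d (n + 1)))
    (dh : ∀ n, Wc k V (n + 1) →ₗ[Polynomial k] Wc k V n)
    (hdh2 : ∀ n, (dh n).comp (dh (n + 1)) = 0)
    (hmod : ∀ n, (epsW k V n).comp ((dh n).restrictScalars k) =
      (d n).comp (epsW k V (n + 1))) :
    ∀ i : ℕ,
      letI B : Submodule (Polynomial k) (Wc k V 0) := LinearMap.range (dh 0)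
      letI Γ : ℕ → Submodule (Polynomial k) (Wc k V 0) :=
        fun ℓ => Ideal.span {(Polynomial.X : Polynomial k) ^ ℓ} • ⊤
      letI F : ℕ → Submodule (Polynomial k) ((Wc k V 0) ⧸ B) :=
        fun ℓ => (Γ ℓ).map B.mkQ
      Nonempty ((F i ⧸ Submodule.comap (F i).subtype (F (i + 1))) ≃ₗ[k]
        (V 0 ⧸ LinearMap.range (d 0))) :=
  perturbed_complex_graded_H0_general k V d hexact dh hdh2 hmod

end
end

section
/- Let (R^•, d_0) be a cochain complex of k-vector spaces in degrees ≤ 0 such that only H^{-1}(R^•, d_0) = 0 is assumed (no vanishing assumed in other negative degrees). Let d_ℏ^{(-1)}: R^{-1}_ℏ → R^0_ℏ and d_ℏ^{(-2)}: R^{-2}_ℏ → R^{-1}_ℏ be ℏ-linear maps reducing to d_0^{(-1)}, d_0^{(-2)} modulo ℏ, with d_ℏ^{(-1)} ∘ d_ℏ^{(-2)} = 0. Consider the three-term complex 0 → R^{-2}_ℏ → R^{-1}_ℏ → R^0_ℏ → 0 with these differentials, and let H^0_ℏ = R^0_ℏ / im(d_ℏ^{(-1)}), with filtration F_i H^0_ℏ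 = image of H^0 of the subcomplex ℏ^i·(three-term complex). Then F_i H^0_ℏ / F_{i+1} H^0_ℏ ≅ ℏ^i H^0(R^•, d_0) canonically as k[ℏ]-modules. -/
noncomputable section

open Polynomial TensorProduct

/-!
Multiplication by `ℏ ^ i` followed by the projection to `H⁰_ℏ` maps `R⁰_ℏ` onto the graded piece
`F_i / F_{i+1}`, with kernel the `w` such that `ℏ ^ i • w ∈ im d_ℏ + ℏ ^ (i + 1) R⁰_ℏ`.
Because `H⁻¹(R, d₀) = 0`, a boundary of `d_ℏ` divisible by `ℏ` is `ℏ` times a boundary: if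
`d_ℏ z = ℏ y`, then `z mod ℏ` is a `d₀`-cycle, hence `d₀ u` with `u ∈ R⁻²`; so
`z - d_ℏ (1 ⊗ u) = ℏ z'` and `y = d_ℏ z'`, as `R_ℏ` has no `ℏ`-torsion and `d_ℏ ∘ d_ℏ = 0`. Dividing by `ℏ ^ i`, the
kernel consists exactly of the `w` whose reduction modulo `ℏ` lies in `im d₀`, and reduction
modulo `ℏ` identifies the graded piece with `R⁰ / im d₀`.
-/

namespace Submodule

variable {R M : Type*} [CommRing R] [AddCommGroup M] [Module R M]

theorem mem_ideal_span_singleton_smul_top {r : R} {x : M} :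
    x ∈ Ideal.span {r} • (⊤ : Submodule R M) ↔ ∃ y, r • y = x := by
  simp [ideal_span_singleton_smul, mem_smul_pointwise_iff_exists]

def powImageFiltration (B : Submodule R M) (r : R) (ℓ : ℕ) : Submodule R (M ⧸ B) :=
  (Ideal.span {r ^ ℓ} • (⊤ : Submodule R M)).map B.mkQ

theorem mem_powImageFiltration {B : Submodule R M} {r : R} {ℓ : ℕ} {q : M ⧸ B} :
    q ∈ powImageFiltration B r ℓ ↔ ∃ y, B.mkQ (r ^ ℓ • y) = q := by
  simp only [powImageFiltration, mem_map, mem_ideal_span_singleton_smul_top]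
  constructor
  · rintro ⟨_, ⟨y, rfl⟩, rfl⟩
    exact ⟨y, rfl⟩
  · rintro ⟨y, rfl⟩
    exact ⟨_, ⟨y, rfl⟩, rfl⟩

section Graded

variable (B : Submodule R M) (r : R) (i : ℕ)

def toPowImageGraded :
    M →ₗ[R] powImageFiltration B r i ⧸
      (powImageFiltration B r (i + 1)).comap (powImageFiltration B r i).subtype :=
  mkQ _ ∘ₗ LinearMap.codRestrict (powImageFiltration B r i)
    (B.mkQ ∘ₗ LinearMap.lsmul R M (r ^ i)) fun m => mem_powImageFiltration.2 ⟨m, rfl⟩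

theorem toPowImageGraded_surjective : Function.Surjective (toPowImageGraded B r i) := by
  intro t
  obtain ⟨⟨q, hq⟩, rfl⟩ := mkQ_surjective _ t
  obtain ⟨m, rfl⟩ := mem_powImageFiltration.1 hq
  exact ⟨m, rfl⟩

theorem toPowImageGraded_eq_zero_iff {m : M} :
    toPowImageGraded B r i m = 0 ↔ r ^ i • m ∈ B ⊔ Ideal.span {r ^ (i + 1)} • ⊤ := by
  rw [toPowImageGraded, LinearMap.comp_apply, mkQ_apply, Quotient.mk_eq_zero, mem_comap,
    ← comap_map_mkQ, mem_comap]
  rfl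

end Graded

end Submodule

section Reduction

variable {k : Type*} [Field k] {V : ℕ → Type*} [∀ n, AddCommGroup (V n)] [∀ n, Module k (V n)]
  {n : ℕ}

theorem epsW_tmul (p : k[X]) (v : V n) : epsW k V n (p ⊗ₜ v) = p.eval 0 • v := by
  simp [epsW]

theorem epsW_one_tmul (v : V n) : epsW k V n ((1 : k[X]) ⊗ₜ v) = v := by
  simp [epsW_tmul]

theorem epsW_X_smul (w : Wc k V n) : epsW k V n ((X : k[X]) • w) = 0 := by
  induction w using TensorProduct.induction_on with
  | zero => simp
  | tmul p v => simp [smul_tmul', epsW_tmul]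
  | add a b ha hb => rw [smul_add, map_add, ha, hb, add_zero]

theorem exists_eq_one_tmul_epsW_add_X_smul (w : Wc k V n) :
    ∃ w', w = (1 : k[X]) ⊗ₜ epsW k V n w + (X : k[X]) • w' := by
  induction w using TensorProduct.induction_on with
  | zero => exact ⟨0, by simp⟩
  | tmul p v =>
    refine ⟨p.divX ⊗ₜ v, ?_⟩
    rw [epsW_tmul, tmul_smul, smul_tmul', smul_tmul', ← add_tmul, smul_eq_mul, smul_eq_C_mul,
      mul_one, ← coeff_zero_eq_eval_zero, add_comm, X_mul_divX_add]
  | add a b ha hb =>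
    obtain ⟨a', ha'⟩ := ha
    obtain ⟨b', hb'⟩ := hb
    refine ⟨a' + b', ?_⟩
    rw [map_add, tmul_add, smul_add]
    conv_lhs => rw [ha', hb']
    abel

theorem epsW_eq_zero_iff {w : Wc k V n} : epsW k V n w = 0 ↔ ∃ w', (X : k[X]) • w' = w := by
  refine ⟨fun h => ?_, fun ⟨w', hw'⟩ => hw' ▸ epsW_X_smul w'⟩
  obtain ⟨w', hw'⟩ := exists_eq_one_tmul_epsW_add_X_smul w
  exact ⟨w', by rw [hw', h, tmul_zero, zero_add]⟩

theorem epsW_surjective : Function.Surjective (epsW k V n) :=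
  fun v => ⟨(1 : k[X]) ⊗ₜ v, epsW_one_tmul v⟩

end Reduction

section PerturbedComplex

variable {k : Type*} [Field k] {V : ℕ → Type*} [∀ n, AddCommGroup (V n)] [∀ n, Module k (V n)]
  {d : ∀ n, V (n + 1) →ₗ[k] V n}
  {dh1 : Wc k V 1 →ₗ[k[X]] Wc k V 0} {dh2 : Wc k V 2 →ₗ[k[X]] Wc k V 1}

theorem epsW_mem_range_of_mem_range
    (hmod1 : ∀ z, epsW k V 0 (dh1 z) = d 0 (epsW k V 1 z))
    {y : Wc k V 0} (hy : y ∈ LinearMap.range dh1) : epsW k V 0 y ∈ LinearMap.range (d 0) := by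
  obtain ⟨z, rfl⟩ := hy
  exact ⟨epsW k V 1 z, (hmod1 z).symm⟩

theorem mem_range_of_X_smul_mem_range
    (hexactm1 : LinearMap.ker (d 0) ≤ LinearMap.range (d 1)) (hdh : ∀ z, dh1 (dh2 z) = 0)
    (hmod1 : ∀ z, epsW k V 0 (dh1 z) = d 0 (epsW k V 1 z))
    (hmod2 : ∀ z, epsW k V 1 (dh2 z) = d 1 (epsW k V 2 z))
    {y : Wc k V 0} (hy : (X : k[X]) • y ∈ LinearMap.range dh1) : y ∈ LinearMap.range dh1 := by
  obtain ⟨z, hz⟩ := hy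
  have hcycle : d 0 (epsW k V 1 z) = 0 := by
    rw [← hmod1]
    exact (congrArg (epsW k V 0) hz).trans (epsW_X_smul y)
  obtain ⟨u, hu⟩ := hexactm1 hcycle
  obtain ⟨z', hz'⟩ : ∃ z', (X : k[X]) • z' = z - dh2 ((1 : k[X]) ⊗ₜ u) := by
    rw [← epsW_eq_zero_iff, map_sub, hmod2, epsW_one_tmul, hu, sub_self]
  refine ⟨z', smul_right_injective (Wc k V 0) (X_ne_zero (R := k)) ?_⟩
  calc (X : k[X]) • dh1 z' = dh1 z - dh1 (dh2 ((1 : k[X]) ⊗ₜ u)) := by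
        rw [← map_smul, hz', map_sub]
    _ = (X : k[X]) • y := by rw [hdh, sub_zero, hz]

theorem mem_range_of_X_pow_smul_mem_range
    (hexactm1 : LinearMap.ker (d 0) ≤ LinearMap.range (d 1)) (hdh : ∀ z, dh1 (dh2 z) = 0)
    (hmod1 : ∀ z, epsW k V 0 (dh1 z) = d 0 (epsW k V 1 z))
    (hmod2 : ∀ z, epsW k V 1 (dh2 z) = d 1 (epsW k V 2 z))
    (i : ℕ) {y : Wc k V 0} (hy : (X : k[X]) ^ i • y ∈ LinearMap.range dh1) :
    y ∈ LinearMap.range dh1 := by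
  induction i generalizing y with
  | zero => simpa using hy
  | succ i ih =>
    rw [pow_succ, mul_smul] at hy
    exact mem_range_of_X_smul_mem_range hexactm1 hdh hmod1 hmod2 (ih hy)

theorem X_pow_smul_mem_range_sup_iff
    (hexactm1 : LinearMap.ker (d 0) ≤ LinearMap.range (d 1)) (hdh : ∀ z, dh1 (dh2 z) = 0)
    (hmod1 : ∀ z, epsW k V 0 (dh1 z) = d 0 (epsW k V 1 z))
    (hmod2 : ∀ z, epsW k V 1 (dh2 z) = d 1 (epsW k V 2 z))
    (i : ℕ) (w : Wc k V 0) :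
    (X : k[X]) ^ i • w ∈ LinearMap.range dh1 ⊔ Ideal.span {(X : k[X]) ^ (i + 1)} • ⊤ ↔
      epsW k V 0 w ∈ LinearMap.range (d 0) := by
  simp only [Submodule.mem_sup, Submodule.mem_ideal_span_singleton_smul_top]
  constructor
  · rintro ⟨b, hb, _, ⟨y, rfl⟩, hby⟩
    have hb' : (X : k[X]) ^ i • (w - (X : k[X]) • y) ∈ LinearMap.range dh1 := by
      rwa [smul_sub, ← mul_smul, ← pow_succ, ← hby, add_sub_cancel_right]
    have hε := epsW_mem_range_of_mem_range hmod1
      (mem_range_of_X_pow_smul_mem_range hexactm1 hdh hmod1 hmod2 i hb')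
    rwa [map_sub, epsW_X_smul, sub_zero] at hε
  · rintro ⟨u, hu⟩
    obtain ⟨y, hy⟩ : ∃ y, (X : k[X]) • y = w - dh1 ((1 : k[X]) ⊗ₜ u) := by
      rw [← epsW_eq_zero_iff, map_sub, hmod1, epsW_one_tmul, hu, sub_self]
    refine ⟨_, ⟨(X : k[X]) ^ i • (1 : k[X]) ⊗ₜ u, rfl⟩, _, ⟨y, rfl⟩, ?_⟩
    rw [map_smul, pow_succ, mul_smul, hy, ← smul_add, add_sub_cancel]

end PerturbedComplex

theorem perturbed_three_term_complex_graded_H0_general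
    (k : Type*) [Field k] (V : ℕ → Type*)
    [∀ n, AddCommGroup (V n)] [∀ n, Module k (V n)]
    (d : ∀ n, V (n + 1) →ₗ[k] V n)
    (hexactm1 : LinearMap.ker (d 0) ≤ LinearMap.range (d 1))
    (dh1 : Wc k V 1 →ₗ[Polynomial k] Wc k V 0)
    (dh2 : Wc k V 2 →ₗ[Polynomial k] Wc k V 1)
    (hdh : dh1.comp dh2 = 0)
    (hmod1 : (epsW k V 0).comp (dh1.restrictScalars k) = (d 0).comp (epsW k V 1))
    (hmod2 : (epsW k V 1).comp (dh2.restrictScalars k) = (d 1).comp (epsW k V 2)) :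
    ∀ i : ℕ,
      letI B : Submodule (Polynomial k) (Wc k V 0) := LinearMap.range dh1
      letI Γ : ℕ → Submodule (Polynomial k) (Wc k V 0) :=
        fun ℓ => Ideal.span {(Polynomial.X : Polynomial k) ^ ℓ} • ⊤
      letI F : ℕ → Submodule (Polynomial k) ((Wc k V 0) ⧸ B) :=
        fun ℓ => (Γ ℓ).map B.mkQ
      Nonempty ((F i ⧸ Submodule.comap (F i).subtype (F (i + 1))) ≃ₗ[k]
        (V 0 ⧸ LinearMap.range (d 0))) := by
  intro i
  let g := (Submodule.toPowImageGraded (LinearMap.range dh1) X i).restrictScalars k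
  let σ := (LinearMap.range (d 0)).mkQ ∘ₗ epsW k V 0
  have hg : Function.Surjective g := by
    simpa [g] using Submodule.toPowImageGraded_surjective (LinearMap.range dh1) X i
  have hσ : Function.Surjective σ :=
    (Submodule.mkQ_surjective _).comp epsW_surjective
  have hker : LinearMap.ker g = LinearMap.ker σ := by
    ext w
    rw [LinearMap.mem_ker, LinearMap.mem_ker, LinearMap.restrictScalars_apply,
      Submodule.toPowImageGraded_eq_zero_iff, LinearMap.comp_apply, Submodule.mkQ_apply,
      Submodule.Quotient.mk_eq_zero]
    exact X_pow_smul_mem_range_sup_iff hexactm1 (LinearMap.congr_fun hdh)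
      (LinearMap.congr_fun hmod1) (LinearMap.congr_fun hmod2) i w
  exact ⟨(g.quotKerEquivOfSurjective hg).symm ≪≫ₗ Submodule.quotEquivOfEq _ _ hker ≪≫ₗ
    σ.quotKerEquivOfSurjective hσ⟩

/-- Second main theorem: let `(R^•, d₀)` be a complex of `k`-vector spaces in degrees `≤ 0`
(degree `-n` is `V n`), assuming only `H^{-1}(R^•, d₀) = 0`. Let `d_ℏ^{(-1)} : R^{-1}_ℏ → R⁰_ℏ`
and `d_ℏ^{(-2)} : R^{-2}_ℏ → R^{-1}_ℏ` be `ℏ`-linear maps reducing mod `ℏ` to `d₀^{(-1)}`,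
`d₀^{(-2)}`, with `d_ℏ^{(-1)} ∘ d_ℏ^{(-2)} = 0`. Then for `H⁰_ℏ = R⁰_ℏ / im d_ℏ^{(-1)}` with
filtration `F_ℓ` induced by the subcomplexes `ℏ^ℓ·(three-term complex)`, one has
`F_i H⁰_ℏ / F_{i+1} H⁰_ℏ ≅ ℏ^i H⁰(R^•, d₀) ≅ H⁰(R^•, d₀)`. -/
theorem perturbed_three_term_complex_graded_H0
    (k : Type*) [Field k] (V : ℕ → Type*)
    [∀ n, AddCommGroup (V n)] [∀ n, Module k (V n)]
    (d : ∀ n, V (n + 1) →ₗ[k] V n)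
    (hd2 : ∀ n, (d n).comp (d (n + 1)) = 0)
    (hexactm1 : LinearMap.ker (d 0) ≤ LinearMap.range (d 1))
    (dh1 : Wc k V 1 →ₗ[Polynomial k] Wc k V 0)
    (dh2 : Wc k V 2 →ₗ[Polynomial k] Wc k V 1)
    (hdh : dh1.comp dh2 = 0)
    (hmod1 : (epsW k V 0).comp (dh1.restrictScalars k) = (d 0).comp (epsW k V 1))
    (hmod2 : (epsW k V 1).comp (dh2.restrictScalars k) = (d 1).comp (epsW k V 2)) :
    ∀ i : ℕ,
      letI B : Submodule (Polynomial k) (Wc k V 0) := LinearMap.range dh1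
      letI Γ : ℕ → Submodule (Polynomial k) (Wc k V 0) :=
        fun ℓ => Ideal.span {(Polynomial.X : Polynomial k) ^ ℓ} • ⊤
      letI F : ℕ → Submodule (Polynomial k) ((Wc k V 0) ⧸ B) :=
        fun ℓ => (Γ ℓ).map B.mkQ
      Nonempty ((F i ⧸ Submodule.comap (F i).subtype (F (i + 1))) ≃ₗ[k]
        (V 0 ⧸ LinearMap.range (d 0))) :=
  perturbed_three_term_complex_graded_H0_general k V d hexactm1 dh1 dh2 hdh hmod1 hmod2

end
end

section
/- Let A be the quotient of T(x,y,z)[ℏ] by the two-sided ideal generated by [x,y]+ℏyx, [y,z]+ℏzy, [z,x]+ℏxz. Then the element T = −zyx + xzy of A satisfies (ℏ − 1)·T = 0 in A; consequently T = ℏ^ℓ T for all ℓ ≥ 0, so T lies in ∩_{ℓ≥0} ℏ^ℓ A. -/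
/-!
With `q = 1 - ℏ` the first and third relations read `xy = q·yx` and `zx = q·xz`. Since `q` is
central, bracketing `zxy` in the two possible ways gives `q·zyx = z(xy) = (zx)y = q·xzy`, that
is `(ℏ - 1)·T = 0`. So `ℏ` fixes `T`, and hence so does every power of `ℏ`.
-/

open Polynomial

/-- The relations `[x,y] + ℏyx ~ 0`, `[y,z] + ℏzy ~ 0`, `[z,x] + ℏxz ~ 0` in
`T(x,y,z)[ℏ]` (letters `x = 0`, `y = 1`, `z = 2`), coming from the Etingof–Ginzburg
potential `Φ_ℏ = -ℏ·Cycl(zyx)`. -/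
def egqRel (k : Type*) [Field k] :
    FreeAlgebra (Polynomial k) (Fin 3) → FreeAlgebra (Polynomial k) (Fin 3) → Prop :=
  fun r s =>
    letI x := FreeAlgebra.ι (Polynomial k) (0 : Fin 3)
    letI y := FreeAlgebra.ι (Polynomial k) (1 : Fin 3)
    letI z := FreeAlgebra.ι (Polynomial k) (2 : Fin 3)
    letI ℏ := algebraMap (Polynomial k) (FreeAlgebra (Polynomial k) (Fin 3)) Polynomial.X
    ((r = (x * y - y * x) + ℏ * (y * x)) ∨
     (r = (y * z - z * y) + ℏ * (z * y)) ∨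
     (r = (z * x - x * z) + ℏ * (x * z))) ∧ s = 0

theorem eq_one_sub_mul_of_sub_add_mul_eq_zero {R : Type*} [Ring R] {a b h : R}
    (H : a - b + h * b = 0) : a = (1 - h) * b :=
  sub_eq_zero.mp (by rw [← H]; noncomm_ring)

theorem mul_mul_mul_eq_of_skew_commute {M : Type*} [Monoid M] {q x y z : M} (hzq : Commute z q)
    (hxy : x * y = q * (y * x)) (hzx : z * x = q * (x * z)) :
    q * (z * y * x) = q * (x * z * y) :=
  calc q * (z * y * x) = z * (q * (y * x)) := by
        rw [← mul_assoc z q, hzq.eq]; simp only [mul_assoc]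
    _ = (z * x) * y := by rw [← hxy, mul_assoc]
    _ = q * (x * z * y) := by rw [hzx, mul_assoc]

theorem sub_one_mul_eq_zero_of_skew_commute {R : Type*} [Ring R] {h x y z : R}
    (hzh : Commute z h) (hxy : x * y - y * x + h * (y * x) = 0)
    (hzx : z * x - x * z + h * (x * z) = 0) :
    (h - 1) * (-(z * y * x) + x * z * y) = 0 := by
  have key := mul_mul_mul_eq_of_skew_commute ((Commute.one_right z).sub_right hzh)
    (eq_one_sub_mul_of_sub_add_mul_eq_zero hxy) (eq_one_sub_mul_of_sub_add_mul_eq_zero hzx)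
  rw [← sub_eq_zero.mpr key]
  noncomm_ring

theorem pow_mul_eq_of_mul_eq {M : Type*} [Monoid M] {h t : M} (H : h * t = t) (n : ℕ) :
    h ^ n * t = t := by
  simpa only [Function.IsFixedPt, mul_left_iterate_apply] using
    Function.IsFixedPt.iterate (f := (h * ·)) H n

theorem eq_pow_mul_of_sub_one_mul_eq_zero {R : Type*} [Ring R] {h t : R} (H : (h - 1) * t = 0)
    (n : ℕ) : t = h ^ n * t :=
  (pow_mul_eq_of_mul_eq (by rwa [sub_mul, one_mul, sub_eq_zero] at H) n).symm

/-- In `A = T(x,y,z)[ℏ]/([x,y]+ℏyx, [y,z]+ℏzy, [z,x]+ℏxz)`, the element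
`T = -zyx + xzy` satisfies `(ℏ-1)·T = 0`; consequently `T = ℏ^ℓ·T` for all `ℓ ≥ 0`,
so `T` lies in `⋂_{ℓ≥0} ℏ^ℓ A`. -/
theorem eg_element_in_all_hbar_powers (k : Type*) [Field k] :
    letI A := RingQuot (egqRel k)
    letI π := RingQuot.mkAlgHom (Polynomial k) (egqRel k)
    letI x : A := π (FreeAlgebra.ι (Polynomial k) (0 : Fin 3))
    letI y : A := π (FreeAlgebra.ι (Polynomial k) (1 : Fin 3))
    letI z : A := π (FreeAlgebra.ι (Polynomial k) (2 : Fin 3))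
    letI ℏA : A := algebraMap (Polynomial k) A Polynomial.X
    letI T : A := - (z * y * x) + x * z * y
    (ℏA - 1) * T = 0 ∧ ∀ ℓ : ℕ, T = ℏA ^ ℓ * T := by
  have rel {r} (h : egqRel k r 0) : RingQuot.mkAlgHom (Polynomial k) (egqRel k) r = 0 := by
    rw [RingQuot.mkAlgHom_rel _ h, map_zero]
  refine ⟨?hT, eq_pow_mul_of_sub_one_mul_eq_zero (R := RingQuot (egqRel k)) ?hT⟩
  refine sub_one_mul_eq_zero_of_skew_commute (R := RingQuot (egqRel k))
    (Algebra.commute_algebraMap_right X _) ?_ ?_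
  · simpa only [map_add, map_sub, map_mul, AlgHom.commutes] using rel ⟨Or.inl rfl, rfl⟩
  · simpa only [map_add, map_sub, map_mul, AlgHom.commutes] using
      rel ⟨Or.inr (Or.inr rfl), rfl⟩
end

section
/- Let α_{ij}^{ab} ∈ k (1 ≤ i,j,a,b ≤ n) satisfy α_{ij}^{ab} = −α_{ji}^{ab} and the identity Cycl_{i,j,k} Σ_s (α_{jk}^{sb} α_{is}^{cd} + α_{jk}^{cs} α_{is}^{db}) = 0 for all i,j,k,b,c,d (where Cycl_{i,j,k} denotes the sum over cyclic permutations of (i,j,k)). Define β_{ij}^{ab} = α_{ij}^{ab} + α_{ij}^{ba}. Then the symmetrization in the upper indices yields the Poisson (Jacobi) identity: for all i,j,k and all a,b,c, Sym_{a,b,c} Σ_s (β_{is}^{ab} β_{jk}^{sc} + β_{js}^{ab} β_{ki}^{sc} + β_{ks}^{ab} β_{ij}^{sc}) = 0, i.e. the quadratic bivector β = Σ β_{ij}^{ab} x_a x_b ∂_i ∧ ∂_j is Poisson. -/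
/-!
Write `T_{ijl}(u,v,w) = Σ_s β_{is}^{uv} β_{jl}^{sw}` and
`S_{ijl}(b,c,d) = Σ_s (α_{jl}^{sb} α_{is}^{cd} + α_{jl}^{cs} α_{is}^{db})`, so that the Jacobi
expression is `Cycl_{i,j,l} T_{ijl}` and the hypothesis says `Cycl_{i,j,l} S_{ijl} = 0`.
Expanding `β = α + αᵗ`, each of the four products in `T_{ijl}` becomes, after symmetrizing in
the upper indices, one of the two products of `S_{ijl}` with its upper indices permuted, so
`Sym T_{ijl} = 2 Sym S_{ijl}` termwise in `s`; summing cyclically gives the claim.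
-/

open Finset

section Symmetrize

variable {ι R : Type*}

def symmetrize₃ [AddCommMonoid R] (f : ι → ι → ι → R) (a b c : ι) : R :=
  f a b c + f a c b + f b a c + f b c a + f c a b + f c b a

theorem symmetrize₃_add [AddCommMonoid R] (f g : ι → ι → ι → R) (a b c : ι) :
    symmetrize₃ (fun u v w => f u v w + g u v w) a b c =
      symmetrize₃ f a b c + symmetrize₃ g a b c := by
  simp only [symmetrize₃]
  abel

theorem symmetrize₃_sum {κ : Type*} [AddCommMonoid R] (t : Finset κ)
    (f : κ → ι → ι → ι → R) (a b c : ι) :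
    symmetrize₃ (fun u v w => ∑ s ∈ t, f s u v w) a b c = ∑ s ∈ t, symmetrize₃ (f s) a b c := by
  simp only [symmetrize₃, sum_add_distrib]

theorem symmetrize₃_zero [AddCommMonoid R] (a b c : ι) :
    symmetrize₃ (fun _ _ _ => (0 : R)) a b c = 0 := by
  simp only [symmetrize₃, add_zero]

end Symmetrize

section Quadratic

variable {ι R : Type*} [Fintype ι] [CommSemiring R]

def upperSymm (α : ι → ι → ι → ι → R) (i j a b : ι) : R :=
  α i j a b + α i j b a

def poissonTerm (β : ι → ι → ι → ι → R) (i j l u v w : ι) : R :=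
  ∑ s, β i s u v * β j l s w

def specialTerm (α : ι → ι → ι → ι → R) (i j l b c d : ι) : R :=
  ∑ s, (α j l s b * α i s c d + α j l c s * α i s d b)

theorem symmetrize₃_poissonTerm_upperSymm (α : ι → ι → ι → ι → R) (i j l a b c : ι) :
    symmetrize₃ (poissonTerm (upperSymm α) i j l) a b c =
      2 * symmetrize₃ (specialTerm α i j l) a b c := by
  unfold poissonTerm specialTerm
  rw [symmetrize₃_sum, symmetrize₃_sum, mul_sum]
  refine sum_congr rfl fun s _ => ?_
  simp only [symmetrize₃, upperSymm]
  ring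

end Quadratic

theorem special_implies_poisson_general
    (k : Type*) [Field k] (n : ℕ) (α : Fin n → Fin n → Fin n → Fin n → k)
    (hspecial : ∀ i j l b c d,
      (∑ s : Fin n, (α j l s b * α i s c d + α j l c s * α i s d b)) +
      (∑ s : Fin n, (α l i s b * α j s c d + α l i c s * α j s d b)) +
      (∑ s : Fin n, (α i j s b * α l s c d + α i j c s * α l s d b)) = 0) :
    ∀ i j l a b c,
      letI β : Fin n → Fin n → Fin n → Fin n → k :=
        fun i j a b => α i j a b + α i j b a
      letI g : Fin n → Fin n → Fin n → k := fun u v w =>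
        ∑ s : Fin n, (β i s u v * β j l s w + β j s u v * β l i s w + β l s u v * β i j s w)
      g a b c + g a c b + g b a c + g b c a + g c a b + g c b a = 0 := by
  intro i j l a b c
  have hcycl : symmetrize₃ (fun u v w => specialTerm α i j l u v w + specialTerm α j l i u v w +
      specialTerm α l i j u v w) a b c = 0 :=
    (congrArg (fun f => symmetrize₃ f a b c) (funext₃ (hspecial i j l))).trans
      (symmetrize₃_zero a b c)
  calc _ = symmetrize₃ (fun u v w => poissonTerm (upperSymm α) i j l u v w +
          poissonTerm (upperSymm α) j l i u v w + poissonTerm (upperSymm α) l i j u v w) a b c := by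
        simp only [sum_add_distrib]
        rfl
    _ = 2 * symmetrize₃ (fun u v w => specialTerm α i j l u v w + specialTerm α j l i u v w +
          specialTerm α l i j u v w) a b c := by
        simp only [symmetrize₃_add, symmetrize₃_poissonTerm_upperSymm, mul_add]
    _ = 0 := by rw [hcycl, mul_zero]

/-- If `α_{ij}^{ab}` is antisymmetric in `i,j` and satisfies
`Cycl_{i,j,k} Σ_s (α_{jk}^{sb} α_{is}^{cd} + α_{jk}^{cs} α_{is}^{db}) = 0`, then the
symmetrization `β_{ij}^{ab} = α_{ij}^{ab} + α_{ij}^{ba}` satisfies the Poisson (Jacobi)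
identity `Sym_{a,b,c} Σ_s (β_{is}^{ab} β_{jk}^{sc} + β_{js}^{ab} β_{ki}^{sc} +
β_{ks}^{ab} β_{ij}^{sc}) = 0`, i.e. the quadratic bivector `β` is Poisson. -/
theorem special_implies_poisson
    (k : Type*) [Field k] (n : ℕ) (α : Fin n → Fin n → Fin n → Fin n → k)
    (hanti : ∀ i j a b, α i j a b = - α j i a b)
    (hspecial : ∀ i j l b c d,
      (∑ s : Fin n, (α j l s b * α i s c d + α j l c s * α i s d b)) +
      (∑ s : Fin n, (α l i s b * α j s c d + α l i c s * α j s d b)) +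
      (∑ s : Fin n, (α i j s b * α l s c d + α i j c s * α l s d b)) = 0) :
    ∀ i j l a b c,
      letI β : Fin n → Fin n → Fin n → Fin n → k :=
        fun i j a b => α i j a b + α i j b a
      letI g : Fin n → Fin n → Fin n → k := fun u v w =>
        ∑ s : Fin n, (β i s u v * β j l s w + β j s u v * β l i s w + β l s u v * β i j s w)
      g a b c + g a c b + g b a c + g b c a + g c a b + g c b a = 0 :=
  special_implies_poisson_general k n α hspecial
end
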